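/- Let A, K ∈ ℝ^{p×p} be symmetric positive definite matrices. Then for every t ∈ [0,1] and x ∈ ℝ^p, the Gaussian density satisfies the transport identity (∂/∂t) φ_{tA+(1−t)K}(x) = (1/2) · tr((A − K) · ∇²_x φ_{tA+(1−t)K}(x)), where ∇²_x denotes the Hessian in the space variable x. -/

import Mathlib

open MeasureTheory ProbabilityTheory Matrix

noncomputable section

/-- Probabilists' Hermite polynomial evaluated at a real number. -/
noncomputable def hermiteR (j : ℕ) (x : ℝ) : ℝ :=
  Polynomial.aeval x (Polynomial.hermite j)

/-- Number of occurrences of `s` in the tuple `α`. -/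
def countIn {q : ℕ} {ι : Type*} [DecidableEq ι] (α : Fin q → ι) (s : ι) : ℕ :=
  (Finset.univ.filter fun r => α r = s).card

/-- Density of the centered Gaussian distribution with covariance matrix `C`. -/
noncomputable def gaussDensity {ι : Type*} [Fintype ι] [DecidableEq ι]
    (C : Matrix ι ι ℝ) (x : ι → ℝ) : ℝ :=
  (2 * Real.pi) ^ (-(Fintype.card ι : ℝ) / 2) * C.det ^ (-(1 : ℝ) / 2) *
    Real.exp (-(x ⬝ᵥ (C⁻¹ *ᵥ x)) / 2)

/-- Positive semidefinite square root of a matrix (junk value `0` if not psd). -/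
noncomputable def msqrt {d : ℕ} (M : Matrix (Fin d) (Fin d) ℝ) : Matrix (Fin d) (Fin d) ℝ :=
  by classical exact if h : M.PosSemidef then
    (h.1.eigenvectorUnitary : Matrix (Fin d) (Fin d) ℝ) *
      Matrix.diagonal (Real.sqrt ∘ h.1.eigenvalues) *
      (star h.1.eigenvectorUnitary : Matrix (Fin d) (Fin d) ℝ) else 0

/-- Operator (spectral) norm of a real matrix, w.r.t. Euclidean norms. -/
noncomputable def matOpNorm {d : ℕ} (M : Matrix (Fin d) (Fin d) ℝ) : ℝ :=
  ‖LinearMap.toContinuousLinearMap (Matrix.toEuclideanLin M)‖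

/-- Hilbert-Schmidt (Frobenius) norm of a real matrix. -/
noncomputable def hsNorm {d : ℕ} (M : Matrix (Fin d) (Fin d) ℝ) : ℝ :=
  Real.sqrt (∑ i, ∑ j, (M i j) ^ 2)

/-- Smallest eigenvalue of a matrix, as the infimum of its real spectrum. -/
noncomputable def minEig {d : ℕ} (K : Matrix (Fin d) (Fin d) ℝ) : ℝ :=
  sInf (spectrum ℝ K)

/-- Total variation distance between two set functions, as the supremum over Borel sets. -/
noncomputable def dTV {α : Type*} [MeasurableSpace α] (μ ν : Set α → ℝ) : ℝ :=
  ⨆ B : {B : Set α // MeasurableSet B}, |μ B.1 - ν B.1|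

/-- `Z` is a centered (square-integrable) conditionally Gaussian vector with respect to the
sub-σ-field `F`, with conditional covariance matrix `S`. -/
def IsCondGaussian {Ω : Type*} {mΩ : MeasurableSpace Ω} (P : Measure Ω) (F : MeasurableSpace Ω)
    {ι : Type*} [Fintype ι] (Z : Ω → ι → ℝ) (S : Ω → Matrix ι ι ℝ) : Prop :=
  F ≤ mΩ ∧ Measurable Z ∧ (∀ i, MemLp (fun ω => Z ω i) 2 P) ∧ (∀ i, ∫ ω, Z ω i ∂P = 0) ∧
    (∀ i j, Measurable[F] fun ω => S ω i j) ∧ (∀ ω, (S ω).PosSemidef) ∧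
    ∀ y : ι → ℝ,
      (P[fun ω => Complex.exp (Complex.I * ((∑ i, y i * Z ω i : ℝ) : ℂ)) | F]) =ᵐ[P]
        fun ω => Complex.exp (-(((∑ i, ∑ j, y i * S ω i j * y j : ℝ) : ℂ)) / 2)

/-- Density (w.r.t. Lebesgue measure on `ℝ^{nd}`) of the Edgeworth expansion of order `4m-1`
associated with a conditionally Gaussian vector with conditional covariance `A^{⊕n}`, with
respect to the Gaussian with covariance `K^{⊕n}`. -/
noncomputable def edgeworthDensity {Ω : Type*} {mΩ : MeasurableSpace Ω} (P : Measure Ω)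
    (d n m : ℕ) (K : Matrix (Fin d) (Fin d) ℝ) (A : Ω → Matrix (Fin d) (Fin d) ℝ)
    (x : Fin d × Fin n → ℝ) : ℝ :=
  (∏ i : Fin n, gaussDensity K (fun j => x (j, i))) +
    ∑ k ∈ Finset.Icc 1 (2 * m - 1),
      (1 / ((k.factorial : ℝ) * 2 ^ k)) *
        ∑ α : Fin (2 * k) → Fin d × Fin n,
          (∫ ω, ∏ r : Fin k,
              (Matrix.blockDiagonal fun _ : Fin n => (msqrt K)⁻¹ * (A ω - K) * (msqrt K)⁻¹)
                (α ⟨2 * r.1, by have := r.2; omega⟩) (α ⟨2 * r.1 + 1, by have := r.2; omega⟩) ∂P) *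
            ((∏ s : Fin d × Fin n,
                hermiteR (countIn α s) (((msqrt K)⁻¹ *ᵥ fun j => x (j, s.2)) s.1)) *
              ∏ i : Fin n, gaussDensity K (fun j => x (j, i)))

end

attribute [local instance] Matrix.linftyOpNormedAddCommGroup Matrix.linftyOpNormedSpace
  Matrix.linftyOpNormedRing Matrix.linftyOpNormedAlgebra

lemma entry_hasDerivAt {p : ℕ} (A K : Matrix (Fin p) (Fin p) ℝ) (t : ℝ) (i j : Fin p) :
    HasDerivAt (fun s : ℝ => (s • A + (1 - s) • K) i j) ((A - K) i j) t := by
  have h : (fun s : ℝ => (s • A + (1 - s) • K) i j)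
      = fun s => s * A i j + (1 - s) * K i j := by
    funext s; simp [Matrix.add_apply, Matrix.smul_apply, smul_eq_mul]
  rw [h]
  have h1 : HasDerivAt (fun s : ℝ => s * A i j) (A i j) t := by
    simpa using (hasDerivAt_id t).mul_const (A i j)
  have h2 : HasDerivAt (fun s : ℝ => (1 - s) * K i j) (-K i j) t := by
    simpa using ((hasDerivAt_const t (1:ℝ)).sub (hasDerivAt_id t)).mul_const (K i j)
  simpa [Matrix.sub_apply, sub_eq_add_neg] using h1.fun_add h2

lemma det_hasDerivAt {p : ℕ} (A K : Matrix (Fin p) (Fin p) ℝ) (t : ℝ) :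
    HasDerivAt (fun s : ℝ => (s • A + (1 - s) • K).det)
      ((Matrix.adjugate (t • A + (1 - t) • K) * (A - K)).trace) t := by
  set C := t • A + (1 - t) • K with hC
  set E := A - K with hE
  have hfun : (fun s : ℝ => (s • A + (1 - s) • K).det)
      = fun s => ∑ σ : Equiv.Perm (Fin p), (Equiv.Perm.sign σ : ℤ) *
          ∏ j, (s • A + (1 - s) • K) (σ j) j := by
    funext s; rw [Matrix.det_apply']
  rw [hfun]
  have hσ : ∀ σ : Equiv.Perm (Fin p), HasDerivAt
      (fun s : ℝ => ((Equiv.Perm.sign σ : ℤ) : ℝ) * ∏ j, (s • A + (1 - s) • K) (σ j) j)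
      (((Equiv.Perm.sign σ : ℤ) : ℝ) *
        ∑ j, (∏ k ∈ Finset.univ.erase j, C (σ k) k) * E (σ j) j) t := by
    intro σ
    have hp : HasDerivAt (fun s : ℝ => ∏ j, (s • A + (1 - s) • K) (σ j) j)
        (∑ j, (∏ k ∈ Finset.univ.erase j, C (σ k) k) * E (σ j) j) t := by
      have hp' := HasDerivAt.fun_finsetProd (u := Finset.univ)
          (f := fun j s => (s • A + (1 - s) • K) (σ j) j)
          (f' := fun j => E (σ j) j) (fun j _ => entry_hasDerivAt A K t (σ j) j)
      simp [smul_eq_mul] at hp' ⊢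
      exact hp'
    exact hp.const_mul _
  have := HasDerivAt.fun_sum (u := Finset.univ) fun σ _ => hσ σ
  refine this.congr_deriv (Eq.symm ?_)
  have key : ∀ i : Fin p, (C.updateCol i fun r => E r i).det
      = ∑ σ : Equiv.Perm (Fin p), ((Equiv.Perm.sign σ : ℤ) : ℝ) *
          (E (σ i) i * ∏ k ∈ Finset.univ.erase i, C (σ k) k) := by
    intro i
    rw [Matrix.det_apply']
    refine Finset.sum_congr rfl fun σ _ => ?_
    congr 1
    rw [← Finset.mul_prod_erase Finset.univ _ (Finset.mem_univ i)]
    congr 1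
    · simp [Matrix.updateCol_apply]
    · exact Finset.prod_congr rfl fun k hk => by
        simp [Matrix.updateCol_apply, Finset.ne_of_mem_erase hk]
  calc (Matrix.adjugate C * E).trace
      = ∑ i, ∑ r, Matrix.adjugate C i r * E r i := by
        simp [Matrix.trace, Matrix.mul_apply, Matrix.diag]
    _ = ∑ i, Matrix.cramer C (fun r => E r i) i := by
        refine Finset.sum_congr rfl fun i _ => ?_
        rw [Matrix.cramer_eq_adjugate_mulVec]
        simp [Matrix.mulVec, dotProduct]
    _ = ∑ i, (C.updateCol i fun r => E r i).det := by
        simp [Matrix.cramer_apply]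
    _ = ∑ i, ∑ σ : Equiv.Perm (Fin p), ((Equiv.Perm.sign σ : ℤ) : ℝ) *
          (E (σ i) i * ∏ k ∈ Finset.univ.erase i, C (σ k) k) := by
        exact Finset.sum_congr rfl fun i _ => key i
    _ = ∑ σ : Equiv.Perm (Fin p), ((Equiv.Perm.sign σ : ℤ) : ℝ) *
          ∑ j, (∏ k ∈ Finset.univ.erase j, C (σ k) k) * E (σ j) j := by
        rw [Finset.sum_comm]
        refine Finset.sum_congr rfl fun σ _ => ?_
        rw [Finset.mul_sum]
        exact Finset.sum_congr rfl fun j _ => by ring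

lemma line_hasDerivAt {p : ℕ} (A K : Matrix (Fin p) (Fin p) ℝ) (t : ℝ) :
    HasDerivAt (fun s : ℝ => s • A + (1 - s) • K) (A - K) t := by
  have h1 : HasDerivAt (fun s : ℝ => s • A) A t := by
    have h := (hasDerivAt_id t).smul_const A
    simp at h
    exact h
  have h2 : HasDerivAt (fun s : ℝ => (1 - s) • K) (-K) t := by
    have h := ((hasDerivAt_const t (1:ℝ)).sub (hasDerivAt_id t)).smul_const K
    simp at h
    exact h
  have h := h1.fun_add h2
  simp [sub_eq_add_neg] at h
  exact h

lemma inv_hasDerivAt {p : ℕ} (A K : Matrix (Fin p) (Fin p) ℝ) (t : ℝ)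
    (h : IsUnit (t • A + (1 - t) • K)) :
    HasDerivAt (fun s : ℝ => (s • A + (1 - s) • K)⁻¹)
      (-((t • A + (1 - t) • K)⁻¹ * (A - K) * (t • A + (1 - t) • K)⁻¹)) t := by
  obtain ⟨u, hu⟩ := h
  have hinv := hasFDerivAt_ringInverse (𝕜 := ℝ) (R := Matrix (Fin p) (Fin p) ℝ) u
  rw [hu] at hinv
  have hd := hinv.comp_hasDerivAt t (line_hasDerivAt A K t)
  have hfe : (fun s : ℝ => (s • A + (1 - s) • K)⁻¹)
      = fun s => Ring.inverse (s • A + (1 - s) • K) := by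
    funext s; rw [Matrix.nonsing_inv_eq_ringInverse]
  rw [hfe]
  refine hd.congr_deriv (Eq.symm ?_)
  simp only [ContinuousLinearMap.neg_apply, ContinuousLinearMap.mulLeftRight_apply]
  rw [← hu, ← Matrix.coe_units_inv]


noncomputable def quadCLM {p : ℕ} (x : Fin p → ℝ) :
    Matrix (Fin p) (Fin p) ℝ →L[ℝ] ℝ :=
  LinearMap.toContinuousLinearMap
    { toFun := fun M => x ⬝ᵥ (M *ᵥ x)
      map_add' := by intro M N; simp [Matrix.add_mulVec, dotProduct_add]
      map_smul' := by intro c M; simp [Matrix.smul_mulVec, dotProduct_smul] }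

@[simp] lemma quadCLM_apply {p : ℕ} (x : Fin p → ℝ) (M : Matrix (Fin p) (Fin p) ℝ) :
    quadCLM x M = x ⬝ᵥ (M *ᵥ x) := rfl

lemma quad_hasDerivAt {p : ℕ} (A K : Matrix (Fin p) (Fin p) ℝ) (x : Fin p → ℝ) (t : ℝ)
    (h : IsUnit (t • A + (1 - t) • K)) :
    HasDerivAt (fun s : ℝ => x ⬝ᵥ ((s • A + (1 - s) • K)⁻¹ *ᵥ x))
      (-(x ⬝ᵥ (((t • A + (1 - t) • K)⁻¹ * (A - K) * (t • A + (1 - t) • K)⁻¹) *ᵥ x))) t := by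
  have := ((quadCLM x).hasFDerivAt.comp_hasDerivAt t (inv_hasDerivAt A K t h))
  refine this.congr_deriv ?_
  change x ⬝ᵥ (-_ : Matrix (Fin p) (Fin p) ℝ) *ᵥ x = _
  simp [Matrix.neg_mulVec]

lemma gauss_t_hasDerivAt {p : ℕ} (A K : Matrix (Fin p) (Fin p) ℝ) (x : Fin p → ℝ) (t : ℝ)
    (hpos : (t • A + (1 - t) • K).PosDef) :
    HasDerivAt (fun s : ℝ => gaussDensity (s • A + (1 - s) • K) x)
      (gaussDensity (t • A + (1 - t) • K) x *
        (x ⬝ᵥ (((t • A + (1 - t) • K)⁻¹ * (A - K) * (t • A + (1 - t) • K)⁻¹) *ᵥ x)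
          - ((t • A + (1 - t) • K)⁻¹ * (A - K)).trace) / 2) t := by
  set C := t • A + (1 - t) • K with hCdef
  have hdpos : 0 < C.det := hpos.det_pos
  have hdne : C.det ≠ 0 := hdpos.ne'
  have hunit : IsUnit C := (Matrix.isUnit_iff_isUnit_det C).mpr hdne.isUnit
  set c0 : ℝ := (2 * Real.pi) ^ (-(Fintype.card (Fin p) : ℝ) / 2) with hc0
  have hfun : (fun s : ℝ => gaussDensity (s • A + (1 - s) • K) x)
      = fun s => c0 * ((s • A + (1 - s) • K).det) ^ (-(1:ℝ)/2) *
          Real.exp (-(x ⬝ᵥ ((s • A + (1 - s) • K)⁻¹ *ᵥ x)) / 2) := by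
    funext s; rfl
  rw [hfun]
  have hr : HasDerivAt (fun s : ℝ => ((s • A + (1 - s) • K).det) ^ (-(1:ℝ)/2))
      (((Matrix.adjugate C) * (A - K)).trace * (-(1:ℝ)/2) * C.det ^ ((-(1:ℝ)/2) - 1)) t :=
    (det_hasDerivAt A K t).rpow_const (Or.inl hdne)
  have hq := quad_hasDerivAt A K x t hunit
  have hexp : HasDerivAt
      (fun s : ℝ => Real.exp (-(x ⬝ᵥ ((s • A + (1 - s) • K)⁻¹ *ᵥ x)) / 2))
      (Real.exp (-(x ⬝ᵥ (C⁻¹ *ᵥ x)) / 2) *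
        ((x ⬝ᵥ ((C⁻¹ * (A - K) * C⁻¹) *ᵥ x)) / 2)) t := by
    have := (hq.neg.div_const (2:ℝ)).exp
    simpa using this
  have hprod := (hr.const_mul c0).mul hexp
  refine hprod.congr_deriv (Eq.symm ?_)
  -- value computation
  have hadj : Matrix.adjugate C = C.det • C⁻¹ := by
    have h1 : C⁻¹ = (Ring.inverse C.det) • Matrix.adjugate C := Matrix.inv_def C
    rw [h1, Ring.inverse_eq_inv', smul_smul, mul_inv_cancel₀ hdne, one_smul]
  have htr : ((Matrix.adjugate C) * (A - K)).trace = C.det * (C⁻¹ * (A - K)).trace := by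
    rw [hadj, Matrix.smul_mul, Matrix.trace_smul, smul_eq_mul]
  have hpow : C.det ^ ((-(1:ℝ)/2) - 1) * C.det = C.det ^ (-(1:ℝ)/2) := by
    rw [← Real.rpow_add_one hdne]; norm_num
  rw [htr]
  have hg : gaussDensity C x = c0 * C.det ^ (-(1:ℝ)/2) * Real.exp (-(x ⬝ᵥ (C⁻¹ *ᵥ x)) / 2) := rfl
  rw [hg]
  linear_combination ((1:ℝ)/2 * c0 * Real.exp (-(x ⬝ᵥ (C⁻¹ *ᵥ x)) / 2) *
    (C⁻¹ * (A - K)).trace) * hpow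

noncomputable def dotCLM {p : ℕ} (w : Fin p → ℝ) : (Fin p → ℝ) →L[ℝ] ℝ :=
  LinearMap.toContinuousLinearMap
    { toFun := fun u => u ⬝ᵥ w
      map_add' := by intro a b; simp [add_dotProduct]
      map_smul' := by intro c a; simp [smul_dotProduct] }

@[simp] lemma dotCLM_apply {p : ℕ} (w u : Fin p → ℝ) : dotCLM w u = u ⬝ᵥ w := rfl

noncomputable def bilCLM {p : ℕ} (M : Matrix (Fin p) (Fin p) ℝ) :
    (Fin p → ℝ) →L[ℝ] (Fin p → ℝ) →L[ℝ] ℝ :=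
  LinearMap.toContinuousLinearMap
    { toFun := fun y => dotCLM (y ᵥ* M)
      map_add' := by
        intro a b; ext u
        simp [Matrix.add_vecMul, dotProduct_add]
      map_smul' := by
        intro c a; ext u
        simp [Matrix.smul_vecMul, dotProduct_smul] }

@[simp] lemma bilCLM_apply {p : ℕ} (M : Matrix (Fin p) (Fin p) ℝ) (y u : Fin p → ℝ) :
    bilCLM M y u = u ⬝ᵥ (y ᵥ* M) := rfl

lemma quadform_hasFDerivAt {p : ℕ} (M : Matrix (Fin p) (Fin p) ℝ) (hM : Mᵀ = M)
    (y : Fin p → ℝ) :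
    HasFDerivAt (fun z : Fin p → ℝ => z ⬝ᵥ (M *ᵥ z)) ((2:ℝ) • dotCLM (y ᵥ* M)) y := by
  have hb : IsBoundedBilinearMap ℝ fun q : (Fin p → ℝ) × (Fin p → ℝ) => bilCLM M q.1 q.2 :=
    (bilCLM M).isBoundedBilinearMap
  have hf : HasFDerivAt (fun z : Fin p → ℝ => (z, z))
      ((ContinuousLinearMap.id ℝ (Fin p → ℝ)).prod (ContinuousLinearMap.id ℝ (Fin p → ℝ))) y :=
    (hasFDerivAt_id y).prodMk (hasFDerivAt_id y)
  have h := HasFDerivAt.comp (f := fun z : Fin p → ℝ => (z, z))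
    (g := fun q : (Fin p → ℝ) × (Fin p → ℝ) => bilCLM M q.1 q.2) y (hb.hasFDerivAt (y, y)) hf
  have hfe : (fun z : Fin p → ℝ => z ⬝ᵥ (M *ᵥ z))
      = fun z : Fin p → ℝ => bilCLM M z z := by
    funext z
    rw [bilCLM_apply, Matrix.dotProduct_mulVec, dotProduct_comm]
  rw [hfe]
  refine h.congr_fderiv (Eq.symm ?_)
  ext u
  have huM : u ᵥ* M = M *ᵥ u := by rw [← hM, Matrix.vecMul_transpose, hM]
  have h1 : y ⬝ᵥ (u ᵥ* M) = u ⬝ᵥ (y ᵥ* M) := by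
    rw [huM, Matrix.dotProduct_mulVec, dotProduct_comm]
  simp only [ContinuousLinearMap.smul_apply, dotCLM_apply, ContinuousLinearMap.comp_apply,
    IsBoundedBilinearMap.deriv_apply, ContinuousLinearMap.prod_apply,
    ContinuousLinearMap.coe_id', id_eq, bilCLM_apply]
  rw [h1]
  simp [smul_eq_mul]
  ring

lemma gauss_hasFDerivAt {p : ℕ} (C : Matrix (Fin p) (Fin p) ℝ) (hM : (C⁻¹)ᵀ = C⁻¹)
    (y : Fin p → ℝ) :
    HasFDerivAt (fun z : Fin p → ℝ => gaussDensity C z)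
      ((-(gaussDensity C y)) • dotCLM (y ᵥ* C⁻¹)) y := by
  have hq := quadform_hasFDerivAt C⁻¹ hM y
  have h0 : HasFDerivAt (fun z : Fin p → ℝ => -(z ⬝ᵥ (C⁻¹ *ᵥ z)) / 2)
      ((2:ℝ)⁻¹ • -((2:ℝ) • dotCLM (y ᵥ* C⁻¹))) y := by
    have h := hq.neg.const_smul ((2:ℝ)⁻¹)
    rw [show (fun z : Fin p → ℝ => -(z ⬝ᵥ (C⁻¹ *ᵥ z)) / 2)
        = (fun z : Fin p → ℝ => (2:ℝ)⁻¹ • -(z ⬝ᵥ (C⁻¹ *ᵥ z))) from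
      funext fun z => by simp [smul_eq_mul]; ring]
    exact h
  have h1 := h0.exp
  have h2 := h1.const_mul ((2 * Real.pi) ^ (-(Fintype.card (Fin p) : ℝ) / 2) *
    C.det ^ (-(1:ℝ)/2))
  have hfe : (fun z : Fin p → ℝ => gaussDensity C z)
      = fun z => (2 * Real.pi) ^ (-(Fintype.card (Fin p) : ℝ) / 2) * C.det ^ (-(1:ℝ)/2) *
          Real.exp (-(z ⬝ᵥ (C⁻¹ *ᵥ z)) / 2) := by
    funext z; rfl
  have hg : gaussDensity C y = (2 * Real.pi) ^ (-(Fintype.card (Fin p) : ℝ) / 2) *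
      C.det ^ (-(1:ℝ)/2) * Real.exp (-(y ⬝ᵥ (C⁻¹ *ᵥ y)) / 2) := rfl
  have heq : (((2 * Real.pi) ^ (-(Fintype.card (Fin p) : ℝ) / 2) * C.det ^ (-(1:ℝ)/2)) •
      (Real.exp (-(y ⬝ᵥ (C⁻¹ *ᵥ y)) / 2) • ((2:ℝ)⁻¹ • -((2:ℝ) • dotCLM (y ᵥ* C⁻¹)))))
      = (-(gaussDensity C y)) • dotCLM (y ᵥ* C⁻¹) := by
    ext u
    rw [hg]
    simp only [ContinuousLinearMap.smul_apply, ContinuousLinearMap.neg_apply, dotCLM_apply,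
      smul_eq_mul]
    ring
  rw [hfe, ← heq]
  exact h2

lemma gauss_contDiff {p : ℕ} (C : Matrix (Fin p) (Fin p) ℝ) :
    ContDiff ℝ (⊤ : ℕ∞) (fun z : Fin p → ℝ => gaussDensity C z) := by
  have hq : ContDiff ℝ (⊤ : ℕ∞) (fun z : Fin p → ℝ => z ⬝ᵥ (C⁻¹ *ᵥ z)) := by
    have h : (fun z : Fin p → ℝ => z ⬝ᵥ (C⁻¹ *ᵥ z))
        = fun z => ∑ k, z k * ∑ l, C⁻¹ k l * z l := by
      funext z; simp [dotProduct, Matrix.mulVec]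
    rw [h]
    exact ContDiff.sum fun k _ =>
      ((ContinuousLinearMap.proj (R := ℝ) (φ := fun _ : Fin p => ℝ) k).contDiff).mul
        (ContDiff.sum fun l _ => contDiff_const.mul
          ((ContinuousLinearMap.proj (R := ℝ) (φ := fun _ : Fin p => ℝ) l).contDiff))
  have : (fun z : Fin p → ℝ => gaussDensity C z)
      = fun z => (2 * Real.pi) ^ (-(Fintype.card (Fin p) : ℝ) / 2) * C.det ^ (-(1:ℝ)/2) *
          Real.exp (-(z ⬝ᵥ (C⁻¹ *ᵥ z)) / 2) := by
    funext z; rfl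
  rw [this]
  exact contDiff_const.mul (Real.contDiff_exp.comp (hq.neg.div_const 2))

lemma gauss_hessian_entry {p : ℕ} (C : Matrix (Fin p) (Fin p) ℝ) (hM : (C⁻¹)ᵀ = C⁻¹)
    (x : Fin p → ℝ) (i j : Fin p) :
    iteratedFDeriv ℝ 2 (fun y : Fin p → ℝ => gaussDensity C y) x
      ![Pi.single i 1, Pi.single j 1]
    = gaussDensity C x * ((x ᵥ* C⁻¹) i * (x ᵥ* C⁻¹) j - C⁻¹ i j) := by
  set f := fun y : Fin p → ℝ => gaussDensity C y with hf
  rw [iteratedFDeriv_two_apply]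
  have hdiffF : DifferentiableAt ℝ (fderiv ℝ f) x :=
    (((gauss_contDiff C).fderiv_right (m := (⊤ : ℕ∞)) (mod_cast le_top)).differentiable (by simp)).differentiableAt
  have hswap := fderiv_clm_apply (𝕜 := ℝ) (c := fderiv ℝ f)
    (u := fun _ : Fin p → ℝ => Pi.single j (1:ℝ)) hdiffF (differentiableAt_const _)
  have hfe : (fun y : Fin p → ℝ => fderiv ℝ f y (Pi.single j (1:ℝ)))
      = fun y => -(gaussDensity C y) * (y ᵥ* C⁻¹) j := by
    funext y
    rw [(gauss_hasFDerivAt C hM y).fderiv]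
    simp [Pi.single_apply, dotProduct]
  have h2 : HasFDerivAt (fun y : Fin p → ℝ => (y ᵥ* C⁻¹) j)
      (dotCLM (fun l => C⁻¹ l j)) x := by
    rw [show (fun y : Fin p → ℝ => (y ᵥ* C⁻¹) j)
        = fun y => dotCLM (fun l => C⁻¹ l j) y from
      funext fun y => by simp [Matrix.vecMul, dotProduct]]
    exact (dotCLM _).hasFDerivAt
  have h1 := (gauss_hasFDerivAt C hM x).fun_neg
  have hmul := h1.fun_mul h2
  -- express the second derivative
  have hout : fderiv ℝ (fderiv ℝ f) x (Pi.single i 1) (Pi.single j 1)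
      = fderiv ℝ (fun y => fderiv ℝ f y (Pi.single j (1:ℝ))) x (Pi.single i 1) := by
    rw [hswap]
    simp
  rw [Matrix.cons_val_zero, Matrix.cons_val_one, Matrix.cons_val_zero, hout, hfe, hmul.fderiv]
  simp only [ContinuousLinearMap.add_apply, ContinuousLinearMap.smul_apply,
    ContinuousLinearMap.neg_apply, dotCLM_apply, smul_eq_mul]
  have e1 : Pi.single i (1:ℝ) ⬝ᵥ (fun l => C⁻¹ l j) = C⁻¹ i j := by
    simp [dotProduct, Pi.single_apply]
  have e2 : Pi.single i (1:ℝ) ⬝ᵥ (x ᵥ* C⁻¹) = (x ᵥ* C⁻¹) i := by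
    simp [dotProduct, Pi.single_apply]
  rw [e1, e2]
  ring

lemma line_posDef {p : ℕ} (A K : Matrix (Fin p) (Fin p) ℝ)
    (hA : A.PosDef) (hK : K.PosDef) (t : ℝ) (ht : t ∈ Set.Icc (0:ℝ) 1) :
    (t • A + (1 - t) • K).PosDef := by
  obtain ⟨ht0, ht1⟩ := ht
  have hAs : Aᵀ = A := by
    rw [← Matrix.conjTranspose_eq_transpose_of_trivial]; exact hA.1.eq
  have hKs : Kᵀ = K := by
    rw [← Matrix.conjTranspose_eq_transpose_of_trivial]; exact hK.1.eq
  refine Matrix.PosDef.of_dotProduct_mulVec_pos ?_ ?_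
  · show (t • A + (1 - t) • K)ᴴ = _
    rw [Matrix.conjTranspose_eq_transpose_of_trivial, Matrix.transpose_add,
      Matrix.transpose_smul, Matrix.transpose_smul, hAs, hKs]
  · intro v hv
    have h1 := hA.dotProduct_mulVec_pos hv
    have h2 := hK.dotProduct_mulVec_pos hv
    simp only [star_trivial] at h1 h2 ⊢
    rw [Matrix.add_mulVec, Matrix.smul_mulVec, Matrix.smul_mulVec,
      dotProduct_add, dotProduct_smul, dotProduct_smul, smul_eq_mul, smul_eq_mul]
    rcases eq_or_lt_of_le ht0 with h | h
    · rw [← h]; norm_num; linarith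
    · have hp1 := mul_pos h h1
      have hp2 := mul_nonneg (by linarith : (0:ℝ) ≤ 1 - t) h2.le
      linarith

/-- Transport identity for the Gaussian density along the interpolation
`t ↦ tA + (1-t)K`: the `t`-derivative equals one half of the trace of `(A-K)` times the
spatial Hessian. -/
theorem gaussian_density_transport (p : ℕ) (A K : Matrix (Fin p) (Fin p) ℝ)
    (hA : A.PosDef) (hK : K.PosDef) (t : ℝ) (ht : t ∈ Set.Icc (0 : ℝ) 1) (x : Fin p → ℝ) :
    deriv (fun s : ℝ => gaussDensity (s • A + (1 - s) • K) x) t =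
      (1 / 2) * Matrix.trace ((A - K) *
        Matrix.of (fun i j : Fin p =>
          iteratedFDeriv ℝ 2 (fun y : Fin p → ℝ => gaussDensity (t • A + (1 - t) • K) y) x
            ![Pi.single i 1, Pi.single j 1])) := by
  have hpos := line_posDef A K hA hK t ht
  have hsym : (t • A + (1 - t) • K)ᵀ = t • A + (1 - t) • K := by
    have hAs : Aᵀ = A := by
      rw [← Matrix.conjTranspose_eq_transpose_of_trivial]; exact hA.1.eq
    have hKs : Kᵀ = K := by
      rw [← Matrix.conjTranspose_eq_transpose_of_trivial]; exact hK.1.eq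
    rw [Matrix.transpose_add, Matrix.transpose_smul, Matrix.transpose_smul, hAs, hKs]
  have hMs : ((t • A + (1 - t) • K)⁻¹)ᵀ = (t • A + (1 - t) • K)⁻¹ := by
    rw [Matrix.transpose_nonsing_inv, hsym]
  set C := t • A + (1 - t) • K with hC
  rw [(gauss_t_hasDerivAt A K x t hpos).deriv]
  have hH : (Matrix.of (fun i j : Fin p =>
      iteratedFDeriv ℝ 2 (fun y : Fin p → ℝ => gaussDensity C y) x
        ![Pi.single i 1, Pi.single j 1]))
      = Matrix.of (fun i j : Fin p =>
          gaussDensity C x * ((x ᵥ* C⁻¹) i * (x ᵥ* C⁻¹) j - C⁻¹ i j)) := by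
    ext i j
    exact gauss_hessian_entry C hMs x i j
  rw [hH]
  -- expand both sides into double sums
  have hrhs : ((A - K) * Matrix.of (fun i j : Fin p =>
      gaussDensity C x * ((x ᵥ* C⁻¹) i * (x ᵥ* C⁻¹) j - C⁻¹ i j))).trace
      = gaussDensity C x *
          ((∑ i, ∑ j, (A - K) i j * ((x ᵥ* C⁻¹) i * (x ᵥ* C⁻¹) j))
            - ∑ i, ∑ j, (A - K) i j * C⁻¹ j i) := by
    rw [Matrix.trace]
    simp only [Matrix.diag, Matrix.mul_apply, Matrix.of_apply]
    have h : ∀ i j : Fin p, (A - K) i j *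
        (gaussDensity C x * ((x ᵥ* C⁻¹) j * (x ᵥ* C⁻¹) i - C⁻¹ j i))
        = gaussDensity C x * ((A - K) i j * ((x ᵥ* C⁻¹) i * (x ᵥ* C⁻¹) j))
          - gaussDensity C x * ((A - K) i j * C⁻¹ j i) := by
      intro i j; ring
    simp_rw [h, Finset.sum_sub_distrib, ← Finset.mul_sum]
    ring
  have htr : (C⁻¹ * (A - K)).trace = ∑ i, ∑ j, (A - K) i j * C⁻¹ j i := by
    rw [Matrix.trace]
    simp only [Matrix.diag, Matrix.mul_apply]
    rw [Finset.sum_comm]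
    exact Finset.sum_congr rfl fun i _ => Finset.sum_congr rfl fun j _ => mul_comm _ _
  have hquad : x ⬝ᵥ ((C⁻¹ * (A - K) * C⁻¹) *ᵥ x)
      = ∑ i, ∑ j, (A - K) i j * ((x ᵥ* C⁻¹) i * (x ᵥ* C⁻¹) j) := by
    have h1 : (C⁻¹ * (A - K) * C⁻¹) *ᵥ x = C⁻¹ *ᵥ ((A - K) *ᵥ (C⁻¹ *ᵥ x)) := by
      rw [← Matrix.mulVec_mulVec, ← Matrix.mulVec_mulVec]
    have h2 : C⁻¹ *ᵥ x = x ᵥ* C⁻¹ := by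
      conv_lhs => rw [← hMs]
      rw [Matrix.mulVec_transpose]
    rw [h1, Matrix.dotProduct_mulVec, h2]
    simp only [dotProduct, Matrix.mulVec]
    refine Finset.sum_congr rfl fun i _ => ?_
    rw [Finset.mul_sum]
    exact Finset.sum_congr rfl fun j _ => by ring
  rw [hrhs, htr, hquad]
  ring
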